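/- arXiv:1302.5953 — 6 statements merged into one kernel-verified Lean document; each statement's English description precedes it below -/
import Mathlib

section
/- Under Assumption 1, for every h ∈ (0,H) there exists h_o ∈ (0,h] such that no point strictly below the height h_o can be trapped below the minimum observable height line z = h: for every δ with 0 < δ < R/2 and δ < h, every characteristic curve c : [0,∞) → ℝ² satisfying c(t) ∈ [δ, R−δ] × [δ, h] for all t ≥ 0 must have second coordinate c(0).2 ≥ h_o. (This is the paper's Theorem 1: there is a nontrivial surface layer 0 < z < h_o all of whose points lie on characteristic curves that escape to the observable region z ≥ h or exit the domain.) -/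
/-!
Along a characteristic curve the circulation `Γ = g(r) ψ(z)` is conserved, and the curve turns
around the stagnation point `(r_o, z_o)`: `r` decreases below `z_o` and increases above it, while
`z` increases left of `r_o` and decreases right of it. So if a trapped curve had `z` eventually on
one side of `z_o`, then `r`, and in turn `z`, would be eventually monotone; the curve would
converge, necessarily to the stagnation point, where `Γ` attains its maximum `g(r_o) ψ(z_o)`.

Now let the curve stay below `h` with `Γ < g(r_o) ψ(h) ≤ g(r_o) ψ(z_o)`. Conservation forbids it to
meet the segment `r = r_o`, `z_o ≤ z ≤ h`, which makes the quadrant `r ≤ r_o, z_o ≤ z` forward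
invariant; so the curve never enters it, as it would then stay above `z_o` for good. Then `z`
can only cross `z_o` downwards and ends on one side of `z_o`, a contradiction. Hence a trapped
curve has `Γ ≥ g(r_o) ψ(h)`, which fails when it starts where `ψ(z) < ψ(h)`, that is, close
enough to `z = 0`.
-/

open Set

/-- Circulation `Γ(r,z) = r·φ(r)·ψ(z)`. -/
noncomputable def circ (φ ψ : ℝ → ℝ) (p : ℝ × ℝ) : ℝ := p.1 * φ p.1 * ψ p.2

/-- Vertical vorticity `ζ(r,z) = g'(r)·ψ(z)/r` where `g(r) = r·φ(r)`. -/
noncomputable def zeta (φ ψ : ℝ → ℝ) (r z : ℝ) : ℝ :=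
  deriv (fun s => s * φ s) r * ψ z / r

/-- Radial vorticity `η(r,z) = −φ(r)·ψ'(z)`. -/
noncomputable def eta (φ ψ : ℝ → ℝ) (r z : ℝ) : ℝ := -(φ r * deriv ψ z)

/-- A characteristic curve on an interval `I`: a differentiable curve
`c(t) = (r(t), z(t))` with `r(t) > 0` satisfying `r' = η(r,z)`, `z' = ζ(r,z)` on `I`. -/
def IsCharCurve (φ ψ : ℝ → ℝ) (I : Set ℝ) (c : ℝ → ℝ × ℝ) : Prop :=
  (∀ t ∈ I, 0 < (c t).1) ∧
  ∀ t ∈ I,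
    HasDerivWithinAt c
      (eta φ ψ (c t).1 (c t).2, zeta φ ψ (c t).1 (c t).2) I t

open Filter Topology

section RealCalculus

variable {f f' : ℝ → ℝ} {T : ℝ}

theorem Convex.monotoneOn_of_hasDerivWithinAt_nonneg {D : Set ℝ} (hD : Convex ℝ D)
    (hf : ∀ x ∈ D, HasDerivWithinAt f (f' x) D x) (hf' : ∀ x ∈ D, 0 ≤ f' x) :
    MonotoneOn f D :=
  _root_.monotoneOn_of_hasDerivWithinAt_nonneg hD (fun x hx => (hf x hx).continuousWithinAt)
    (fun x hx => (hf x (interior_subset hx)).mono interior_subset)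
    (fun x hx => hf' x (interior_subset hx))

theorem Convex.antitoneOn_of_hasDerivWithinAt_nonpos {D : Set ℝ} (hD : Convex ℝ D)
    (hf : ∀ x ∈ D, HasDerivWithinAt f (f' x) D x) (hf' : ∀ x ∈ D, f' x ≤ 0) :
    AntitoneOn f D :=
  _root_.antitoneOn_of_hasDerivWithinAt_nonpos hD (fun x hx => (hf x hx).continuousWithinAt)
    (fun x hx => (hf x (interior_subset hx)).mono interior_subset)
    (fun x hx => hf' x (interior_subset hx))

theorem eq_zero_of_tendsto_of_tendsto_deriv {a L : ℝ}
    (hf : ∀ t ∈ Ici T, HasDerivWithinAt f (f' t) (Ici T) t)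
    (hfa : Tendsto f atTop (𝓝 a)) (hL : Tendsto f' atTop (𝓝 L)) : L = 0 := by
  suffices key : ∀ {f f' : ℝ → ℝ} {a L : ℝ}, (∀ t ∈ Ici T, HasDerivWithinAt f (f' t) (Ici T) t) →
      Tendsto f atTop (𝓝 a) → Tendsto f' atTop (𝓝 L) → ¬ 0 < L by
    rcases lt_trichotomy L 0 with hneg | hzero | hpos
    · exact absurd (neg_pos.2 hneg) (key (fun t ht => (hf t ht).neg) hfa.neg hL.neg)
    · exact hzero
    · exact absurd hpos (key hf hfa hL)
  intro f f' a L hf hfa hL hL0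
  obtain ⟨T₁, hT₁⟩ := eventually_atTop.1 (hL.eventually (eventually_ge_nhds (half_lt_self hL0)))
  set S := max T T₁
  have hmono : MonotoneOn (fun t => f t - L / 2 * t) (Ici S) := by
    refine (convex_Ici S).monotoneOn_of_hasDerivWithinAt_nonneg
      (fun t ht => ((hf t ((le_max_left T T₁).trans ht)).mono
        (Ici_subset_Ici.2 (le_max_left T T₁))).sub ((hasDerivWithinAt_id t _).const_mul (L / 2)))
      fun t ht => ?_
    simpa using hT₁ t ((le_max_right _ _).trans ht)
  have hlin : Tendsto (fun t => f S - L / 2 * S + L / 2 * t) atTop atTop :=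
    tendsto_atTop_add_const_left _ _ (tendsto_id.const_mul_atTop (half_pos hL0))
  refine not_tendsto_nhds_of_tendsto_atTop (tendsto_atTop_mono' _ ?_ hlin) a hfa
  filter_upwards [eventually_ge_atTop S] with t ht
  linarith [hmono self_mem_Ici ht ht]

theorem mapsTo_Ici_of_eventually_nhdsGT {E : Type*} [TopologicalSpace E] {c : ℝ → E}
    {Q : Set E} (hc : ContinuousOn c (Ici T)) (hQ : IsClosed Q) (hT : c T ∈ Q)
    (hstep : ∀ t ∈ Ici T, c t ∈ Q → ∀ᶠ s in 𝓝[>] t, c s ∈ Q) : MapsTo c (Ici T) Q := by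
  intro t ht
  have hclosed : IsClosed (c ⁻¹' Q ∩ Icc T t) := by
    rw [inter_comm]
    exact (hc.mono Icc_subset_Ici_self).preimage_isClosed_of_isClosed isClosed_Icc hQ
  exact hclosed.Icc_subset_of_forall_mem_nhdsWithin hT
    (fun s hs => hstep s hs.2.1 hs.1) (right_mem_Icc.2 ht)

theorem eventually_nhdsGT_le_of_hasDerivWithinAt {d t a : ℝ} (hf : HasDerivWithinAt f d (Ici t) t)
    (hle : f t ≤ a) (hd : f t = a → d < 0) : ∀ᶠ s in 𝓝[>] t, f s ≤ a := by
  rcases hle.lt_or_eq with hlt | heq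
  · exact (hf.continuousWithinAt.mono Ioi_subset_Ici_self).eventually (eventually_le_nhds hlt)
  · filter_upwards [hf.Ioi_of_Ici.limsup_slope_le' (lt_irrefl t) (hd heq), self_mem_nhdsWithin]
      with s hslope hts
    rw [slope_def_field, div_neg_iff] at hslope
    have : t < s := hts
    rcases hslope with h | h <;> linarith [h.1, h.2]

theorem eventually_nhdsGT_ge_of_hasDerivWithinAt {d t a : ℝ} (hf : HasDerivWithinAt f d (Ici t) t)
    (hle : a ≤ f t) (hd : f t = a → 0 < d) : ∀ᶠ s in 𝓝[>] t, a ≤ f s := by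
  filter_upwards [eventually_nhdsGT_le_of_hasDerivWithinAt hf.neg (neg_le_neg hle)
    fun h => neg_neg_of_pos (hd (neg_injective h))] with s hs
  exact neg_le_neg_iff.1 hs

end RealCalculus

section EventuallyOneSide

variable {f : ℝ → ℝ} {T : ℝ}

def EventuallyOneSide (f : ℝ → ℝ) (a : ℝ) : Prop :=
  (∀ᶠ t in atTop, f t ≤ a) ∨ ∀ᶠ t in atTop, a ≤ f t

theorem EventuallyOneSide.exists_Ici {a : ℝ} (h : EventuallyOneSide f a) (T₀ : ℝ) :
    ∃ T ≥ T₀, (∀ t ∈ Ici T, f t ≤ a) ∨ ∀ t ∈ Ici T, a ≤ f t := by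
  rcases h with h | h <;> obtain ⟨T, hT⟩ := eventually_atTop.1 h
  · exact ⟨max T T₀, le_max_right _ _, .inl fun t ht => hT t ((le_max_left _ _).trans ht)⟩
  · exact ⟨max T T₀, le_max_right _ _, .inr fun t ht => hT t ((le_max_left _ _).trans ht)⟩

theorem eventuallyOneSide_of_monotoneOn_or_antitoneOn
    (hf : MonotoneOn f (Ici T) ∨ AntitoneOn f (Ici T)) (a : ℝ) : EventuallyOneSide f a := by
  rcases hf with hf | hf
  · by_cases h : ∃ t₀ ∈ Ici T, a ≤ f t₀
    · obtain ⟨t₀, ht₀, hat₀⟩ := h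
      exact .inr (eventually_atTop.2 ⟨t₀, fun t ht => hat₀.trans (hf ht₀ (ht₀.trans ht) ht)⟩)
    · push Not at h
      exact .inl (eventually_atTop.2 ⟨T, fun t ht => (h t ht).le⟩)
  · by_cases h : ∃ t₀ ∈ Ici T, f t₀ ≤ a
    · obtain ⟨t₀, ht₀, hat₀⟩ := h
      exact .inl (eventually_atTop.2 ⟨t₀, fun t ht => (hf ht₀ (ht₀.trans ht) ht).trans hat₀⟩)
    · push Not at h
      exact .inr (eventually_atTop.2 ⟨T, fun t ht => (h t ht).le⟩)

theorem exists_tendsto_of_monotoneOn_or_antitoneOn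
    (hf : MonotoneOn f (Ici T) ∨ AntitoneOn f (Ici T)) (hb : Bornology.IsBounded (f '' Ici T)) :
    ∃ L, Tendsto f atTop (𝓝 L) := by
  have heq : (fun t => f (max t T)) =ᶠ[atTop] f :=
    eventually_atTop.2 ⟨T, fun t ht => congrArg f (max_eq_left ht)⟩
  have hrange : range (fun t => f (max t T)) ⊆ f '' Ici T := by
    rintro _ ⟨t, rfl⟩
    exact mem_image_of_mem f (le_max_right t T)
  rcases hf with hf | hf
  · exact ⟨_, (tendsto_atTop_ciSup (fun s t hst => hf (le_max_right s T) (le_max_right t T)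
      (max_le_max_right T hst)) (hb.bddAbove.mono hrange)).congr' heq⟩
  · exact ⟨_, (tendsto_atTop_ciInf (fun s t hst => hf (le_max_right s T) (le_max_right t T)
      (max_le_max_right T hst)) (hb.bddBelow.mono hrange)).congr' heq⟩

end EventuallyOneSide

structure SinglePeaked (f : ℝ → ℝ) (L m : ℝ) : Prop where
  differentiable : Differentiable ℝ f
  apply_zero : f 0 = 0
  pos : ∀ x ∈ Ioo 0 L, 0 < f x
  mem_Ioo : m ∈ Ioo 0 L
  deriv_peak : deriv f m = 0
  deriv_ne_zero : ∀ x ∈ Ioo 0 L, x ≠ m → deriv f x ≠ 0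
  le_peak : ∀ x ∈ Ioo 0 L, f x ≤ f m

namespace SinglePeaked

variable {f : ℝ → ℝ} {L m x : ℝ}

theorem deriv_pos (hf : SinglePeaked f L m) (hx : x ∈ Ioo 0 m) : 0 < deriv f x := by
  have hm := hf.mem_Ioo
  refine ((hasDerivWithinAt_forall_lt_or_forall_gt_of_forall_ne (convex_Ioo 0 m)
    (fun y _ => (hf.differentiable y).hasDerivAt.hasDerivWithinAt)
    fun y hy => hf.deriv_ne_zero y ⟨hy.1, hy.2.trans hm.2⟩ hy.2.ne).resolve_left
    fun hneg => ?_) x hx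
  have hanti : StrictAntiOn f (Icc 0 m) :=
    strictAntiOn_of_deriv_neg (convex_Icc 0 m) hf.differentiable.continuous.continuousOn
      (by simpa only [interior_Icc] using hneg)
  have := hanti (left_mem_Icc.2 hm.1.le) (right_mem_Icc.2 hm.1.le) hm.1
  linarith [hf.pos m hm, hf.apply_zero]

theorem deriv_neg (hf : SinglePeaked f L m) (hx : x ∈ Ioo m L) : deriv f x < 0 := by
  have hm := hf.mem_Ioo
  refine ((hasDerivWithinAt_forall_lt_or_forall_gt_of_forall_ne (convex_Ioo m L)
    (fun y _ => (hf.differentiable y).hasDerivAt.hasDerivWithinAt)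
    fun y hy => hf.deriv_ne_zero y ⟨hm.1.trans hy.1, hy.2⟩ hy.1.ne').resolve_right
    fun hpos => ?_) x hx
  have hmono : StrictMonoOn f (Icc m x) :=
    strictMonoOn_of_deriv_pos (convex_Icc m x) hf.differentiable.continuous.continuousOn
      fun y hy => hpos y (by rw [interior_Icc] at hy; exact ⟨hy.1, hy.2.trans hx.2⟩)
  have := hmono (left_mem_Icc.2 hx.1.le) (right_mem_Icc.2 hx.1.le) hx.1
  linarith [hf.le_peak x ⟨hm.1.trans hx.1, hx.2⟩]

theorem deriv_nonneg (hf : SinglePeaked f L m) (hx : x ∈ Ioc 0 m) : 0 ≤ deriv f x := by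
  rcases hx.2.lt_or_eq with hlt | rfl
  · exact (hf.deriv_pos ⟨hx.1, hlt⟩).le
  · exact hf.deriv_peak.ge

theorem deriv_nonpos (hf : SinglePeaked f L m) (hx : x ∈ Ico m L) : deriv f x ≤ 0 := by
  rcases hx.1.lt_or_eq with hlt | rfl
  · exact (hf.deriv_neg ⟨hlt, hx.2⟩).le
  · exact hf.deriv_peak.le

theorem antitoneOn (hf : SinglePeaked f L m) : AntitoneOn f (Ico m L) :=
  antitoneOn_of_deriv_nonpos (convex_Ico m L) hf.differentiable.continuous.continuousOn
    hf.differentiable.differentiableOn fun y hy => by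
      rw [interior_Ico] at hy
      exact (hf.deriv_neg hy).le

end SinglePeaked

namespace IsCharCurve

variable {φ ψ : ℝ → ℝ} {I J : Set ℝ} {c : ℝ → ℝ × ℝ} {t : ℝ}

theorem mono (hc : IsCharCurve φ ψ I c) (hJI : J ⊆ I) : IsCharCurve φ ψ J c :=
  ⟨fun t ht => hc.1 t (hJI ht), fun t ht => (hc.2 t (hJI ht)).mono hJI⟩

theorem continuousOn (hc : IsCharCurve φ ψ I c) : ContinuousOn c I :=
  fun t ht => (hc.2 t ht).continuousWithinAt

theorem hasDerivWithinAt_fst (hc : IsCharCurve φ ψ I c) (ht : t ∈ I) :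
    HasDerivWithinAt (fun s => (c s).1) (eta φ ψ (c t).1 (c t).2) I t :=
  (ContinuousLinearMap.fst ℝ ℝ ℝ).hasFDerivAt.comp_hasDerivWithinAt t (hc.2 t ht)

theorem hasDerivWithinAt_snd (hc : IsCharCurve φ ψ I c) (ht : t ∈ I) :
    HasDerivWithinAt (fun s => (c s).2) (zeta φ ψ (c t).1 (c t).2) I t :=
  (ContinuousLinearMap.snd ℝ ℝ ℝ).hasFDerivAt.comp_hasDerivWithinAt t (hc.2 t ht)

theorem hasDerivWithinAt_circ (hc : IsCharCurve φ ψ I c) (hφ : Differentiable ℝ φ)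
    (hψ : Differentiable ℝ ψ) (ht : t ∈ I) :
    HasDerivWithinAt (fun s => circ φ ψ (c s)) 0 I t := by
  have hg : Differentiable ℝ fun s => s * φ s := differentiable_id.mul hφ
  have hr := (hg _).hasDerivAt.comp_hasDerivWithinAt t (hc.hasDerivWithinAt_fst ht)
  have hz := (hψ _).hasDerivAt.comp_hasDerivWithinAt t (hc.hasDerivWithinAt_snd ht)
  have hr0 : (c t).1 ≠ 0 := (hc.1 t ht).ne'
  refine (hr.mul hz).congr_deriv ?_
  simp only [Function.comp_apply, eta, zeta]
  field_simp
  ring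

theorem circ_eq (hc : IsCharCurve φ ψ (Ici t) c) (hφ : Differentiable ℝ φ)
    (hψ : Differentiable ℝ ψ) {s : ℝ} (hs : s ∈ Ici t) : circ φ ψ (c s) = circ φ ψ (c t) :=
  constant_of_has_deriv_right_zero
    (fun _ hx => (hc.hasDerivWithinAt_circ hφ hψ hx.1).continuousWithinAt.mono Icc_subset_Ici_self)
    (fun _ hx => (hc.hasDerivWithinAt_circ hφ hψ hx.1).mono (Ici_subset_Ici.2 hx.1))
    s ⟨hs, le_rfl⟩

end IsCharCurve

theorem apply_eq_zero_of_tendsto_of_hasDerivWithinAt {c : ℝ → ℝ × ℝ} {F : ℝ × ℝ → ℝ × ℝ}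
    {T : ℝ} {p : ℝ × ℝ} (hc : ∀ t ∈ Ici T, HasDerivWithinAt c (F (c t)) (Ici T) t)
    (hF : ContinuousAt F p) (hp : Tendsto c atTop (𝓝 p)) : F p = 0 := by
  have hFc := hF.tendsto.comp hp
  ext
  · exact eq_zero_of_tendsto_of_tendsto_deriv (fun t ht =>
      (ContinuousLinearMap.fst ℝ ℝ ℝ).hasFDerivAt.comp_hasDerivWithinAt t (hc t ht))
      hp.fst_nhds hFc.fst_nhds
  · exact eq_zero_of_tendsto_of_tendsto_deriv (fun t ht =>
      (ContinuousLinearMap.snd ℝ ℝ ℝ).hasFDerivAt.comp_hasDerivWithinAt t (hc t ht))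
      hp.snd_nhds hFc.snd_nhds

-- Assumption 1, in terms of `g(r) = r φ(r)`.
structure SinglePeakedVortex (R H : ℝ) (φ ψ : ℝ → ℝ) (r_o z_o : ℝ) : Prop where
  contDiff_φ : ContDiff ℝ 1 φ
  contDiff_ψ : ContDiff ℝ 1 ψ
  φ_pos : ∀ r ∈ Ioo 0 R, 0 < φ r
  singlePeaked_g : SinglePeaked (fun s => s * φ s) R r_o
  singlePeaked_ψ : SinglePeaked ψ H z_o

namespace SinglePeakedVortex

variable {R H r_o z_o r z T : ℝ} {φ ψ : ℝ → ℝ} {c : ℝ → ℝ × ℝ} {K : Set (ℝ × ℝ)}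

theorem eta_nonpos (hA : SinglePeakedVortex R H φ ψ r_o z_o) (hr : r ∈ Ioo 0 R)
    (hz : z ∈ Ioc 0 z_o) : eta φ ψ r z ≤ 0 :=
  neg_nonpos.2 (mul_nonneg (hA.φ_pos r hr).le (hA.singlePeaked_ψ.deriv_nonneg hz))

theorem eta_nonneg (hA : SinglePeakedVortex R H φ ψ r_o z_o) (hr : r ∈ Ioo 0 R)
    (hz : z ∈ Ico z_o H) : 0 ≤ eta φ ψ r z :=
  neg_nonneg.2 (mul_nonpos_of_nonneg_of_nonpos (hA.φ_pos r hr).le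
    (hA.singlePeaked_ψ.deriv_nonpos hz))

theorem zeta_pos (hA : SinglePeakedVortex R H φ ψ r_o z_o) (hr : r ∈ Ioo 0 r_o)
    (hz : z ∈ Ioo 0 H) : 0 < zeta φ ψ r z :=
  div_pos (mul_pos (hA.singlePeaked_g.deriv_pos hr) (hA.singlePeaked_ψ.pos z hz)) hr.1

theorem zeta_nonneg (hA : SinglePeakedVortex R H φ ψ r_o z_o) (hr : r ∈ Ioc 0 r_o)
    (hz : z ∈ Ioo 0 H) : 0 ≤ zeta φ ψ r z :=
  div_nonneg (mul_nonneg (hA.singlePeaked_g.deriv_nonneg hr) (hA.singlePeaked_ψ.pos z hz).le)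
    hr.1.le

theorem zeta_neg (hA : SinglePeakedVortex R H φ ψ r_o z_o) (hr : r ∈ Ioo r_o R)
    (hz : z ∈ Ioo 0 H) : zeta φ ψ r z < 0 :=
  div_neg_of_neg_of_pos (mul_neg_of_neg_of_pos (hA.singlePeaked_g.deriv_neg hr)
    (hA.singlePeaked_ψ.pos z hz)) (hA.singlePeaked_g.mem_Ioo.1.trans hr.1)

theorem zeta_nonpos (hA : SinglePeakedVortex R H φ ψ r_o z_o) (hr : r ∈ Ico r_o R)
    (hz : z ∈ Ioo 0 H) : zeta φ ψ r z ≤ 0 :=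
  div_nonpos_of_nonpos_of_nonneg (mul_nonpos_of_nonpos_of_nonneg
    (hA.singlePeaked_g.deriv_nonpos hr) (hA.singlePeaked_ψ.pos z hz).le)
    (hA.singlePeaked_g.mem_Ioo.1.trans_le hr.1).le

theorem continuous_circ (hA : SinglePeakedVortex R H φ ψ r_o z_o) : Continuous (circ φ ψ) := by
  have := hA.contDiff_φ.continuous
  have := hA.contDiff_ψ.continuous
  unfold circ
  fun_prop

theorem continuousAt_vorticity (hA : SinglePeakedVortex R H φ ψ r_o z_o) {p : ℝ × ℝ}
    (hp : p.1 ≠ 0) :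
    ContinuousAt (fun q : ℝ × ℝ => (eta φ ψ q.1 q.2, zeta φ ψ q.1 q.2)) p := by
  have := hA.contDiff_φ.continuous
  have := hA.contDiff_ψ.continuous
  have := hA.contDiff_ψ.continuous_deriv le_rfl
  have := (contDiff_id.mul hA.contDiff_φ).continuous_deriv le_rfl
  unfold eta zeta
  fun_prop (disch := assumption)

theorem eq_peak_of_tendsto (hA : SinglePeakedVortex R H φ ψ r_o z_o) {p : ℝ × ℝ}
    (hc : IsCharCurve φ ψ (Ici T) c) (hp : Tendsto c atTop (𝓝 p))
    (hpD : p ∈ Ioo 0 R ×ˢ Ioo 0 H) : p = (r_o, z_o) := by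
  have hstag := apply_eq_zero_of_tendsto_of_hasDerivWithinAt hc.2
    (hA.continuousAt_vorticity hpD.1.1.ne') hp
  simp only [Prod.mk_eq_zero, eta, zeta, neg_eq_zero, mul_eq_zero, div_eq_zero_iff,
    (hA.φ_pos _ hpD.1).ne', (hA.singlePeaked_ψ.pos _ hpD.2).ne', hpD.1.1.ne', false_or,
    or_false] at hstag
  refine Prod.ext ?_ ?_
  · by_contra hne
    exact hA.singlePeaked_g.deriv_ne_zero _ hpD.1 hne hstag.2
  · by_contra hne
    exact hA.singlePeaked_ψ.deriv_ne_zero _ hpD.2 hne hstag.1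


theorem not_tendsto_of_circ_lt (hA : SinglePeakedVortex R H φ ψ r_o z_o) (hK : IsClosed K)
    (hKD : K ⊆ Ioo 0 R ×ˢ Ioo 0 H) (hc : IsCharCurve φ ψ (Ici T) c) (htrap : MapsTo c (Ici T) K)
    (hΓ : circ φ ψ (c T) < circ φ ψ (r_o, z_o)) (p : ℝ × ℝ) : ¬ Tendsto c atTop (𝓝 p) := by
  intro hp
  have hpK : p ∈ K := hK.mem_of_tendsto hp (eventually_atTop.2 ⟨T, fun t ht => htrap ht⟩)
  obtain rfl := hA.eq_peak_of_tendsto hc hp (hKD hpK)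
  have hconst : (fun _ => circ φ ψ (c T)) =ᶠ[atTop] fun t => circ φ ψ (c t) :=
    eventually_atTop.2 ⟨T, fun t ht => (hc.circ_eq hA.contDiff_φ.differentiable_one
      hA.contDiff_ψ.differentiable_one ht).symm⟩
  exact hΓ.ne (tendsto_nhds_unique (tendsto_const_nhds.congr' hconst)
    (hA.continuous_circ.tendsto _ |>.comp hp))

theorem monotoneOn_or_antitoneOn_fst (hA : SinglePeakedVortex R H φ ψ r_o z_o)
    (hc : IsCharCurve φ ψ (Ici T) c) (hD : MapsTo c (Ici T) (Ioo 0 R ×ˢ Ioo 0 H))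
    (hz : (∀ t ∈ Ici T, (c t).2 ≤ z_o) ∨ ∀ t ∈ Ici T, z_o ≤ (c t).2) :
    MonotoneOn (fun t => (c t).1) (Ici T) ∨ AntitoneOn (fun t => (c t).1) (Ici T) := by
  rcases hz with hz | hz
  · exact .inr <| (convex_Ici T).antitoneOn_of_hasDerivWithinAt_nonpos
      (fun t ht => hc.hasDerivWithinAt_fst ht)
      fun t ht => hA.eta_nonpos (hD ht).1 ⟨(hD ht).2.1, hz t ht⟩
  · exact .inl <| (convex_Ici T).monotoneOn_of_hasDerivWithinAt_nonneg
      (fun t ht => hc.hasDerivWithinAt_fst ht)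
      fun t ht => hA.eta_nonneg (hD ht).1 ⟨hz t ht, (hD ht).2.2⟩

theorem monotoneOn_or_antitoneOn_snd (hA : SinglePeakedVortex R H φ ψ r_o z_o)
    (hc : IsCharCurve φ ψ (Ici T) c) (hD : MapsTo c (Ici T) (Ioo 0 R ×ˢ Ioo 0 H))
    (hr : (∀ t ∈ Ici T, (c t).1 ≤ r_o) ∨ ∀ t ∈ Ici T, r_o ≤ (c t).1) :
    MonotoneOn (fun t => (c t).2) (Ici T) ∨ AntitoneOn (fun t => (c t).2) (Ici T) := by
  rcases hr with hr | hr
  · exact .inl <| (convex_Ici T).monotoneOn_of_hasDerivWithinAt_nonneg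
      (fun t ht => hc.hasDerivWithinAt_snd ht)
      fun t ht => hA.zeta_nonneg ⟨(hD ht).1.1, hr t ht⟩ (hD ht).2
  · exact .inr <| (convex_Ici T).antitoneOn_of_hasDerivWithinAt_nonpos
      (fun t ht => hc.hasDerivWithinAt_snd ht)
      fun t ht => hA.zeta_nonpos ⟨hr t ht, (hD ht).1.2⟩ (hD ht).2

theorem not_eventuallyOneSide_snd (hA : SinglePeakedVortex R H φ ψ r_o z_o) (hK : IsCompact K)
    (hKD : K ⊆ Ioo 0 R ×ˢ Ioo 0 H) (hc : IsCharCurve φ ψ (Ici 0) c)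
    (htrap : MapsTo c (Ici 0) K) (hΓ : circ φ ψ (c 0) < circ φ ψ (r_o, z_o)) :
    ¬ EventuallyOneSide (fun t => (c t).2) z_o := by
  intro hz
  have hD := htrap.mono_right hKD
  have hbdd : ∀ {π : ℝ × ℝ → ℝ}, Continuous π → ∀ {T : ℝ}, 0 ≤ T →
      Bornology.IsBounded ((fun t => π (c t)) '' Ici T) := fun hπ T hT =>
    (hK.image hπ).isBounded.subset <| by
      rintro _ ⟨t, ht, rfl⟩
      exact mem_image_of_mem _ (htrap (hT.trans ht))
  obtain ⟨T, hT, hzT⟩ := hz.exists_Ici 0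
  have hr := hA.monotoneOn_or_antitoneOn_fst (hc.mono (Ici_subset_Ici.2 hT))
    (hD.mono_left (Ici_subset_Ici.2 hT)) hzT
  obtain ⟨T', hT', hrT'⟩ := (eventuallyOneSide_of_monotoneOn_or_antitoneOn hr r_o).exists_Ici 0
  have hz' := hA.monotoneOn_or_antitoneOn_snd (hc.mono (Ici_subset_Ici.2 hT'))
    (hD.mono_left (Ici_subset_Ici.2 hT')) hrT'
  obtain ⟨rl, hrl⟩ := exists_tendsto_of_monotoneOn_or_antitoneOn hr (hbdd continuous_fst hT)
  obtain ⟨zl, hzl⟩ := exists_tendsto_of_monotoneOn_or_antitoneOn hz' (hbdd continuous_snd hT')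
  exact hA.not_tendsto_of_circ_lt hK.isClosed hKD hc htrap hΓ _ (hrl.prodMk_nhds hzl)

theorem mapsTo_Iic_prod_Ici (hA : SinglePeakedVortex R H φ ψ r_o z_o)
    (hc : IsCharCurve φ ψ (Ici T) c) (hD : MapsTo c (Ici T) (Ioo 0 R ×ˢ Ioo 0 H))
    (hne : ∀ t ∈ Ici T, z_o ≤ (c t).2 → (c t).1 ≠ r_o) (hT : c T ∈ Iic r_o ×ˢ Ici z_o) :
    MapsTo c (Ici T) (Iic r_o ×ˢ Ici z_o) := by
  refine mapsTo_Ici_of_eventually_nhdsGT hc.continuousOn (isClosed_Iic.prod isClosed_Ici) hT ?_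
  rintro t ht ⟨hr, hz⟩
  have hrlt : (c t).1 < r_o := hr.lt_of_ne (hne t ht hz)
  have hct := hc.mono (Ici_subset_Ici.2 ht)
  filter_upwards [eventually_nhdsGT_le_of_hasDerivWithinAt (hct.hasDerivWithinAt_fst self_mem_Ici)
      hr fun h => absurd h hrlt.ne,
    eventually_nhdsGT_ge_of_hasDerivWithinAt (hct.hasDerivWithinAt_snd self_mem_Ici) hz
      fun _ => hA.zeta_pos ⟨(hD ht).1.1, hrlt⟩ (hD ht).2] with s hrs hzs
  exact ⟨hrs, hzs⟩

theorem snd_le_of_forall_lt_fst (hA : SinglePeakedVortex R H φ ψ r_o z_o)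
    (hc : IsCharCurve φ ψ (Ici T) c) (hD : MapsTo c (Ici T) (Ioo 0 R ×ˢ Ioo 0 H))
    (hright : ∀ t ∈ Ici T, z_o ≤ (c t).2 → r_o < (c t).1) (hT : (c T).2 ≤ z_o) :
    ∀ t ∈ Ici T, (c t).2 ≤ z_o := by
  refine mapsTo_Ici_of_eventually_nhdsGT (continuous_snd.comp_continuousOn hc.continuousOn)
    isClosed_Iic hT fun t ht hz => ?_
  exact eventually_nhdsGT_le_of_hasDerivWithinAt
    ((hc.mono (Ici_subset_Ici.2 ht)).hasDerivWithinAt_snd self_mem_Ici) hz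
    fun heq => hA.zeta_neg ⟨hright t ht heq.ge, (hD ht).1.2⟩ (hD ht).2

theorem fst_ne_of_circ_lt (hA : SinglePeakedVortex R H φ ψ r_o z_o) {p : ℝ × ℝ} {h : ℝ}
    (hp : p ∈ Ioo 0 R ×ˢ Ioo 0 H) (hz : z_o ≤ p.2) (hzh : p.2 ≤ h) (hh : h < H)
    (hΓ : circ φ ψ p < circ φ ψ (r_o, h)) : p.1 ≠ r_o := by
  intro hpr
  have hψ : ψ h ≤ ψ p.2 := hA.singlePeaked_ψ.antitoneOn ⟨hz, hp.2.2⟩ ⟨hz.trans hzh, hh⟩ hzh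
  have hg : 0 < r_o * φ r_o := hA.singlePeaked_g.pos _ hA.singlePeaked_g.mem_Ioo
  simp only [circ, hpr] at hΓ
  nlinarith

theorem circ_le_of_mapsTo (hA : SinglePeakedVortex R H φ ψ r_o z_o) (hK : IsCompact K)
    (hKD : K ⊆ Ioo 0 R ×ˢ Ioo 0 H) {h : ℝ} (hKh : ∀ p ∈ K, p.2 ≤ h) (hh : h < H)
    (hc : IsCharCurve φ ψ (Ici 0) c) (htrap : MapsTo c (Ici 0) K) :
    circ φ ψ (r_o, h) ≤ circ φ ψ (c 0) := by
  by_contra! hlt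
  have hD := htrap.mono_right hKD
  have hpeak : circ φ ψ (r_o, h) ≤ circ φ ψ (r_o, z_o) := by
    have hh0 : 0 < h := (hD self_mem_Ici).2.1.trans_le (hKh _ (htrap self_mem_Ici))
    exact mul_le_mul_of_nonneg_left (hA.singlePeaked_ψ.le_peak h ⟨hh0, hh⟩)
      (hA.singlePeaked_g.pos _ hA.singlePeaked_g.mem_Ioo).le
  have hnot := hA.not_eventuallyOneSide_snd hK hKD hc htrap (hlt.trans_le hpeak)
  have hne : ∀ t ∈ Ici 0, z_o ≤ (c t).2 → (c t).1 ≠ r_o := fun t ht hz =>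
    hA.fst_ne_of_circ_lt (hD ht) hz (hKh _ (htrap ht)) hh <| by
      rwa [hc.circ_eq hA.contDiff_φ.differentiable_one hA.contDiff_ψ.differentiable_one ht]
  have hright : ∀ t ∈ Ici 0, z_o ≤ (c t).2 → r_o < (c t).1 := by
    intro T hT hzT
    refine (hne T hT hzT).symm.lt_of_le (le_of_not_ge fun hrT => hnot (.inr ?_))
    have hsub : Ici T ⊆ Ici 0 := Ici_subset_Ici.2 hT
    exact eventually_atTop.2 ⟨T, fun t ht => (hA.mapsTo_Iic_prod_Ici (hc.mono hsub)
      (hD.mono_left hsub) (fun s hs => hne s (hsub hs)) ⟨hrT, hzT⟩ ht).2⟩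
  apply hnot
  by_cases hbelow : ∃ T ∈ Ici (0 : ℝ), (c T).2 ≤ z_o
  · obtain ⟨T, hT, hzT⟩ := hbelow
    have hsub : Ici T ⊆ Ici 0 := Ici_subset_Ici.2 hT
    exact .inl (eventually_atTop.2 ⟨T, hA.snd_le_of_forall_lt_fst (hc.mono hsub)
      (hD.mono_left hsub) (fun t ht => hright t (hsub ht)) hzT⟩)
  · push Not at hbelow
    exact .inr (eventually_atTop.2 ⟨0, fun t ht => (hbelow t ht).le⟩)

end SinglePeakedVortex

theorem nontrivial_surface_layer_general
    (R H : ℝ)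
    (φ ψ : ℝ → ℝ)
    (hφC2 : ContDiff ℝ 2 φ) (hψC2 : ContDiff ℝ 2 ψ)
    (hψ0 : ψ 0 = 0)
    (hφpos : ∀ r ∈ Ioo (0:ℝ) R, 0 < φ r)
    (hψpos : ∀ z ∈ Ioo (0:ℝ) H, 0 < ψ z)
    (r_o : ℝ) (hro : r_o ∈ Ioo (0:ℝ) R)
    (z_o : ℝ) (hzo : z_o ∈ Ioo (0:ℝ) H)
    (hg'ro : deriv (fun s => s * φ s) r_o = 0)
    (hg'ne : ∀ r ∈ Ioo (0:ℝ) R, r ≠ r_o → deriv (fun s => s * φ s) r ≠ 0)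
    (hψ'zo : deriv ψ z_o = 0)
    (hψ'ne : ∀ z ∈ Ioo (0:ℝ) H, z ≠ z_o → deriv ψ z ≠ 0)
    (hgmax : ∀ r ∈ Ioo (0:ℝ) R, r * φ r ≤ r_o * φ r_o)
    (hψmax : ∀ z ∈ Ioo (0:ℝ) H, ψ z ≤ ψ z_o)
    (h : ℝ) (hh : h ∈ Ioo (0:ℝ) H) :
    ∃ h_o ∈ Ioc (0:ℝ) h,
      ∀ δ : ℝ, 0 < δ → δ < R / 2 → δ < h →
        ∀ c : ℝ → ℝ × ℝ, IsCharCurve φ ψ (Ici 0) c →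
          (∀ t ∈ Ici (0:ℝ), c t ∈ Icc δ (R - δ) ×ˢ Icc δ h) →
          h_o ≤ (c 0).2 := by
  have hφ : ContDiff ℝ 1 φ := hφC2.of_le one_le_two
  have hψ : ContDiff ℝ 1 ψ := hψC2.of_le one_le_two
  have hA : SinglePeakedVortex R H φ ψ r_o z_o :=
    ⟨hφ, hψ, hφpos, ⟨differentiable_id.mul hφ.differentiable_one, zero_mul _,
      fun r hr => mul_pos hr.1 (hφpos r hr), hro, hg'ro, hg'ne, hgmax⟩,
      ⟨hψ.differentiable_one, hψ0, hψpos, hzo, hψ'zo, hψ'ne, hψmax⟩⟩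
  obtain ⟨ε, hε, hψε⟩ : ∃ ε > 0, ∀ ⦃z : ℝ⦄, dist z 0 < ε → ψ z < ψ h :=
    Metric.eventually_nhds_iff.1 <| hψ.continuous.continuousAt.eventually
      (eventually_lt_nhds (by rw [hψ0]; exact hψpos h hh))
  refine ⟨min h ε, ⟨lt_min hh.1 hε, min_le_left _ _⟩, fun δ hδ _ _ c hc htrap => ?_⟩
  by_contra! hlow
  have hbox : Icc δ (R - δ) ×ˢ Icc δ h ⊆ Ioo 0 R ×ˢ Ioo 0 H :=
    prod_mono (Icc_subset_Ioo hδ (by linarith)) (Icc_subset_Ioo hδ hh.2)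
  have hc0 := htrap 0 self_mem_Ici
  have hψz0 : ψ (c 0).2 < ψ h := hψε <| by
    rw [Real.dist_0_eq_abs, abs_of_pos (hδ.trans_le hc0.2.1)]
    exact hlow.trans_le (min_le_right _ _)
  have hΓ := hA.circ_le_of_mapsTo (isCompact_Icc.prod isCompact_Icc) hbox (fun p hp => hp.2.2)
    hh.2 hc htrap
  refine absurd hΓ (not_le.2 ?_)
  calc circ φ ψ (c 0) ≤ r_o * φ r_o * ψ (c 0).2 :=
        mul_le_mul_of_nonneg_right (hgmax _ (hbox hc0).1) (hψpos _ (hbox hc0).2).le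
    _ < circ φ ψ (r_o, h) := mul_lt_mul_of_pos_left hψz0 (hA.singlePeaked_g.pos r_o hro)

/-- **Theorem 1 (nontrivial retrievable surface layer).** Under Assumption 1, for every
minimum observable height `h ∈ (0,H)` there is an `h_o ∈ (0,h]` such that no point with
height strictly below `h_o` can lie on a characteristic curve that remains trapped in
`[δ, R−δ] × [δ, h]` for all forward time: any such trapped curve starts at height `≥ h_o`. -/
theorem nontrivial_surface_layer
    (R H : ℝ) (hR : 0 < R) (hH : 0 < H)
    (φ ψ : ℝ → ℝ)
    (hφC2 : ContDiff ℝ 2 φ) (hψC2 : ContDiff ℝ 2 ψ)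
    (hφ0 : φ 0 = 0) (hψ0 : ψ 0 = 0)
    (hφpos : ∀ r ∈ Ioo (0:ℝ) R, 0 < φ r)
    (hψpos : ∀ z ∈ Ioo (0:ℝ) H, 0 < ψ z)
    (r_o : ℝ) (hro : r_o ∈ Ioo (0:ℝ) R)
    (z_o : ℝ) (hzo : z_o ∈ Ioo (0:ℝ) H)
    (hg'ro : deriv (fun s => s * φ s) r_o = 0)
    (hg'ne : ∀ r ∈ Ioo (0:ℝ) R, r ≠ r_o → deriv (fun s => s * φ s) r ≠ 0)
    (hψ'zo : deriv ψ z_o = 0)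
    (hψ'ne : ∀ z ∈ Ioo (0:ℝ) H, z ≠ z_o → deriv ψ z ≠ 0)
    (hgmax : ∀ r ∈ Ioo (0:ℝ) R, r * φ r ≤ r_o * φ r_o)
    (hψmax : ∀ z ∈ Ioo (0:ℝ) H, ψ z ≤ ψ z_o)
    (h : ℝ) (hh : h ∈ Ioo (0:ℝ) H) :
    ∃ h_o ∈ Ioc (0:ℝ) h,
      ∀ δ : ℝ, 0 < δ → δ < R / 2 → δ < h →
        ∀ c : ℝ → ℝ × ℝ, IsCharCurve φ ψ (Ici 0) c →
          (∀ t ∈ Ici (0:ℝ), c t ∈ Icc δ (R - δ) ×ˢ Icc δ h) →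
          h_o ≤ (c 0).2 :=
  nontrivial_surface_layer_general R H φ ψ hφC2 hψC2 hψ0 hφpos hψpos r_o hro z_o hzo hg'ro hg'ne
    hψ'zo hψ'ne hgmax hψmax h hh
end

section
/- If φ and ψ are continuously differentiable and c = (r,z) : I → ℝ² is a characteristic curve on an interval I, then the circulation is constant along the curve: Γ(r(t), z(t)) = Γ(r(t₀), z(t₀)) for all t, t₀ ∈ I. In other words, Γ = r·φ(r)·ψ(z) is a first integral of the characteristic system, so characteristic curves lie on level curves of Γ. (Lemma: the characteristic curves are the level curves of the circulation Γ = r·v.) -/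
open Set

/-! The vorticity field `(η, ζ)` is orthogonal to `∇Γ = (g'(r) ψ(z), g(r) ψ'(z))`, because
`r ζ = g' ψ` and `η = -φ ψ'`; hence `Γ` has zero derivative along every characteristic curve,
and a function with zero derivative on an interval is constant. -/

theorem Set.OrdConnected.eq_of_hasDerivWithinAt_zero {E : Type*} [NormedAddCommGroup E]
    [NormedSpace ℝ E] {I : Set ℝ} (hI : I.OrdConnected) {f : ℝ → E}
    (hf : ∀ t ∈ I, HasDerivWithinAt f 0 I t) {x y : ℝ} (hx : x ∈ I) (hy : y ∈ I) :
    f x = f y := by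
  have hle : ‖f x - f y‖ ≤ 0 := by
    simpa using hI.convex.norm_image_sub_le_of_norm_hasDerivWithin_le hf
      (fun _ _ => norm_zero.le) hy hx
  exact sub_eq_zero.mp (norm_le_zero_iff.mp hle)

theorem hasDerivWithinAt_circ_comp {φ ψ : ℝ → ℝ} {c : ℝ → ℝ × ℝ} {c' : ℝ × ℝ} {s : Set ℝ}
    {t : ℝ} (hφ : DifferentiableAt ℝ φ (c t).1) (hψ : DifferentiableAt ℝ ψ (c t).2)
    (hc : HasDerivWithinAt c c' s t) :
    HasDerivWithinAt (fun t => circ φ ψ (c t))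
      (deriv (fun s => s * φ s) (c t).1 * ψ (c t).2 * c'.1 +
        (c t).1 * φ (c t).1 * deriv ψ (c t).2 * c'.2) s t := by
  have hg : DifferentiableAt ℝ (fun s => s * φ s) (c t).1 := differentiableAt_id.mul hφ
  have hgr := hg.hasDerivAt.comp_hasDerivWithinAt t hc.fst
  have hψz := hψ.hasDerivAt.comp_hasDerivWithinAt t hc.snd
  exact (hgr.mul hψz).congr_deriv (by simp only [Function.comp_apply]; ring)

theorem grad_circ_inner_vorticity_eq_zero (φ ψ : ℝ → ℝ) {r : ℝ} (hr : r ≠ 0) (z : ℝ) :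
    deriv (fun s => s * φ s) r * ψ z * eta φ ψ r z + r * φ r * deriv ψ z * zeta φ ψ r z = 0 := by
  simp only [eta, zeta]
  field_simp
  ring

theorem IsCharCurve.hasDerivWithinAt_circ_zero {φ ψ : ℝ → ℝ} {I : Set ℝ} {c : ℝ → ℝ × ℝ}
    (hc : IsCharCurve φ ψ I c) (hφ : Differentiable ℝ φ) (hψ : Differentiable ℝ ψ) {t : ℝ}
    (ht : t ∈ I) : HasDerivWithinAt (fun t => circ φ ψ (c t)) 0 I t := by
  have h := hasDerivWithinAt_circ_comp (hφ _) (hψ _) (hc.2 t ht)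
  rwa [grad_circ_inner_vorticity_eq_zero φ ψ (hc.1 t ht).ne'] at h

/-- The circulation `Γ = r·φ(r)·ψ(z)` is a first integral of the characteristic
system: it is constant along every characteristic curve. -/
theorem circulation_constant_along_characteristics
    (φ ψ : ℝ → ℝ) (hφ : ContDiff ℝ 1 φ) (hψ : ContDiff ℝ 1 ψ)
    (I : Set ℝ) (hI : I.OrdConnected)
    (c : ℝ → ℝ × ℝ) (hc : IsCharCurve φ ψ I c) :
    ∀ t ∈ I, ∀ t₀ ∈ I, circ φ ψ (c t) = circ φ ψ (c t₀) := fun _ ht _ ht₀ =>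
  hI.eq_of_hasDerivWithinAt_zero
    (fun _ hs => hc.hasDerivWithinAt_circ_zero (hφ.differentiable one_ne_zero)
      (hψ.differentiable one_ne_zero) hs) ht ht₀
end

section
/- Let φ, ψ : ℝ → ℝ be continuously differentiable with φ(r) > 0 for all r ∈ (0,R), and suppose ψ'(z) > 0 for all z ∈ (0,z_o), where 0 < z_o < H. Let δ and h satisfy 0 < δ < h < z_o and δ < R/2. Then there is no characteristic curve c : [0,∞) → ℝ² with c(t) ∈ [δ, R−δ] × [δ, h] for all t ≥ 0. -/
open Set

/-- When the minimum observable height `h` lies below the height `z_o` of the tangential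
velocity maximum, the information void is empty: no characteristic curve can remain
trapped in `[δ, R−δ] × [δ, h]` for all forward time. -/
theorem information_void_empty_below_max
    (R H : ℝ) (hR : 0 < R) (hH : 0 < H)
    (φ ψ : ℝ → ℝ)
    (hφC1 : ContDiff ℝ 1 φ) (hψC1 : ContDiff ℝ 1 ψ)
    (hφpos : ∀ r ∈ Ioo (0:ℝ) R, 0 < φ r)
    (z_o : ℝ) (hzo : z_o ∈ Ioo (0:ℝ) H)
    (hψ'pos : ∀ z ∈ Ioo (0:ℝ) z_o, 0 < deriv ψ z)
    (δ h : ℝ) (hδ : 0 < δ) (hδh : δ < h) (hhzo : h < z_o) (hδR : δ < R / 2) :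
    ¬ ∃ c : ℝ → ℝ × ℝ, IsCharCurve φ ψ (Ici 0) c ∧
        ∀ t ∈ Ici (0:ℝ), c t ∈ Icc δ (R - δ) ×ˢ Icc δ h := by
  rintro ⟨c, ⟨hpos, hderiv⟩, hbox⟩
  -- the compact box
  set K : Set (ℝ × ℝ) := Icc δ (R - δ) ×ˢ Icc δ h with hK
  have hKc : IsCompact K := (isCompact_Icc).prod isCompact_Icc
  -- the function f = φ(r) * ψ'(z) is continuous and positive on K
  set f : ℝ × ℝ → ℝ := fun p => φ p.1 * deriv ψ p.2 with hf
  have hfc : Continuous f :=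
    (hφC1.continuous.comp continuous_fst).mul
      ((hψC1.continuous_deriv le_rfl).comp continuous_snd)
  have hfpos : ∀ p ∈ K, 0 < f p := by
    rintro ⟨r, z⟩ ⟨⟨hr1, hr2⟩, ⟨hz1, hz2⟩⟩
    have hrR : r < R := lt_of_le_of_lt hr2 (by linarith)
    exact mul_pos (hφpos r ⟨lt_of_lt_of_le hδ hr1, hrR⟩)
      (hψ'pos z ⟨lt_of_lt_of_le hδ hz1, lt_of_le_of_lt hz2 hhzo⟩)
  have hKne : K.Nonempty := ⟨(δ, δ), ⟨⟨le_refl _, by linarith⟩, ⟨le_refl _, by linarith⟩⟩⟩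
  obtain ⟨p₀, hp₀K, hp₀min⟩ := hKc.exists_isMinOn hKne hfc.continuousOn
  set ε : ℝ := f p₀ with hε
  have hεpos : 0 < ε := hfpos p₀ hp₀K
  -- derivative bound: for t ≥ 0, eta = -(f (c t)) ≤ -ε
  have hbound : ∀ t ∈ Ici (0:ℝ), eta φ ψ (c t).1 (c t).2 + ε ≤ 0 := by
    intro t ht
    have hle : ε ≤ f (c t) := hp₀min (hbox t ht)
    simp only [eta, hf] at hle ⊢
    linarith
  -- consider u t = r t + ε t and show it is antitone on Ici 0
  set u : ℝ → ℝ := fun t => (c t).1 + ε * t with hu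
  have hud : ∀ t ∈ Ici (0:ℝ), HasDerivWithinAt u
      (eta φ ψ (c t).1 (c t).2 + ε) (Ici 0) t := by
    intro t ht
    have h1 : HasDerivWithinAt (fun t => (c t).1)
        (eta φ ψ (c t).1 (c t).2) (Ici 0) t := (hderiv t ht).fst
    have h2 : HasDerivWithinAt (fun t : ℝ => ε * t) ε (Ici 0) t := by
      simpa using ((hasDerivAt_id t).const_mul ε).hasDerivWithinAt
    exact h1.add h2
  have hanti : AntitoneOn u (Ici 0) := by
    refine antitoneOn_of_hasDerivWithinAt_nonpos (f' := fun t => eta φ ψ (c t).1 (c t).2 + ε) (convex_Ici 0)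
      (fun t ht => ((hud t ht).continuousWithinAt)) (fun t ht => ?_) (fun t ht => ?_)
    · exact (hud t (interior_subset ht)).mono interior_subset
    · exact hbound t (interior_subset ht)
  -- contradiction at T = R / ε
  set T : ℝ := R / ε with hT
  have hTpos : 0 < T := div_pos hR hεpos
  have h0 : u T ≤ u 0 := hanti self_mem_Ici (le_of_lt hTpos) (le_of_lt hTpos)
  have hεT : ε * T = R := by rw [hT, mul_div_assoc']; exact mul_div_cancel_left₀ R hεpos.ne'
  have hc0 : (c 0).1 ≤ R - δ := (hbox 0 self_mem_Ici).1.2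
  have hcT : δ ≤ (c T).1 := (hbox T (le_of_lt hTpos)).1.1
  simp only [hu, mul_zero, add_zero] at h0
  rw [hεT] at h0
  linarith
end

section
/- Under Assumption 1, let z₁ ∈ (0,H) and let c : ℝ → ℝ² be a characteristic curve defined on all of ℝ with c(0) = (r_o, z₁), and suppose there is a compact set K ⊆ (0,R)×(0,H) with c(t) ∈ K for all t ∈ ℝ. Then the characteristic curve through (r_o, z₁) is a closed curve: there exists T > 0 with c(T) = c(0). (This is the paper's Lemma that characteristic curves through the line r = r_o that remain in the open interior of the domain are closed curves.) -/
/-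
The circulation `Γ = g(r) ψ(z)` is constant along characteristic curves. By Assumption 1 the
field `(η, ζ)` turns clockwise around `(r_o, z_o)`: it points left below `z = z_o`, up left of
`r = r_o`, right above and down right of it. A trajectory confined to a compact `K` cannot stall
in a quadrant: one coordinate drifts monotonically until the other is pushed at a speed bounded
below on a compact part of `K`, so it must cross the next half-axis. After four quarter turns
the curve is back on `r = r_o`, on the same side of `z_o`, where `ψ`, hence `Γ`, is injective;
so it is back at `c 0`. If `z₁ = z_o` the curve sits at the strict maximum of `Γ` and is constant.
-/

open Set

theorem HasDerivAt.fst {𝕜 E F : Type*} [NontriviallyNormedField 𝕜] [NormedAddCommGroup E]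
    [NormedSpace 𝕜 E] [NormedAddCommGroup F] [NormedSpace 𝕜 F] {γ : 𝕜 → E × F} {v : E × F}
    {t : 𝕜} (h : HasDerivAt γ v t) : HasDerivAt (fun t => (γ t).1) v.1 t :=
  (ContinuousLinearMap.fst 𝕜 E F).hasFDerivAt.comp_hasDerivAt t h

theorem HasDerivAt.snd {𝕜 E F : Type*} [NontriviallyNormedField 𝕜] [NormedAddCommGroup E]
    [NormedSpace 𝕜 E] [NormedAddCommGroup F] [NormedSpace 𝕜 F] {γ : 𝕜 → E × F} {v : E × F}
    {t : 𝕜} (h : HasDerivAt γ v t) : HasDerivAt (fun t => (γ t).2) v.2 t :=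
  (ContinuousLinearMap.snd 𝕜 E F).hasFDerivAt.comp_hasDerivAt t h

theorem exists_first_zero {f : ℝ → ℝ} {a b : ℝ} (hab : a ≤ b) (hf : ContinuousOn f (Icc a b))
    (ha : f a < 0) (hb : 0 ≤ f b) : ∃ c ∈ Ioc a b, f c = 0 ∧ ∀ x ∈ Ico a c, f x < 0 := by
  have hzero : (Icc a b ∩ f ⁻¹' {0}).Nonempty := by
    obtain ⟨c, hc, hfc⟩ := intermediate_value_Icc hab hf ⟨ha.le, hb⟩
    exact ⟨c, hc, hfc⟩
  obtain ⟨c, ⟨hc, hfc⟩, hmin⟩ :=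
    (isCompact_Icc.of_isClosed_subset (hf.preimage_isClosed_of_isClosed isClosed_Icc
      isClosed_singleton) inter_subset_left).exists_isMinOn hzero continuousOn_id
  have hac : a < c := hc.1.lt_of_ne (by rintro rfl; exact ha.ne hfc)
  refine ⟨c, ⟨hac, hc.2⟩, hfc, fun x hx => ?_⟩
  by_contra! hfx
  obtain ⟨y, hy, hfy⟩ := intermediate_value_Icc hx.1 (hf.mono (Icc_subset_Icc le_rfl
    (hx.2.le.trans hc.2))) ⟨ha.le, hfx⟩
  have : c ≤ y := hmin ⟨⟨hy.1, hy.2.trans (hx.2.le.trans hc.2)⟩, hfy⟩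
  exact absurd (hy.2.trans_lt hx.2) this.not_gt

def IsClockwiseOn (F : ℝ × ℝ → ℝ × ℝ) (K : Set (ℝ × ℝ)) : Prop :=
  ∀ p ∈ K, (p.2 < 0 → (F p).1 < 0) ∧ (0 < p.2 → 0 < (F p).1) ∧
    (p.1 < 0 → 0 < (F p).2) ∧ (0 < p.1 → (F p).2 < 0)

structure IsClockwiseOrbit (γ : ℝ → ℝ × ℝ) (F : ℝ × ℝ → ℝ × ℝ) (K : Set (ℝ × ℝ)) : Prop where
  isCompact : IsCompact K
  continuousOn : ContinuousOn F K
  isClockwiseOn : IsClockwiseOn F K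
  mem : ∀ t, γ t ∈ K
  hasDerivAt : ∀ t, HasDerivAt γ (F (γ t)) t

def rot90 : (ℝ × ℝ) ≃L[ℝ] ℝ × ℝ :=
  .equivOfInverse ((-ContinuousLinearMap.snd ℝ ℝ ℝ).prod (.fst ℝ ℝ ℝ))
    ((ContinuousLinearMap.snd ℝ ℝ ℝ).prod (-.fst ℝ ℝ ℝ)) (fun _ => by simp) (fun _ => by simp)

@[simp] theorem rot90_apply (p : ℝ × ℝ) : rot90 p = (-p.2, p.1) := rfl

@[simp] theorem rot90_symm_apply (p : ℝ × ℝ) : rot90.symm p = (p.2, -p.1) := rfl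

section Planar

variable {F : ℝ × ℝ → ℝ × ℝ} {K : Set (ℝ × ℝ)}

theorem IsClockwiseOn.mono {L : Set (ℝ × ℝ)} (h : IsClockwiseOn F L)
    (hKL : K ⊆ L) : IsClockwiseOn F K :=
  fun p hp => h p (hKL hp)

theorem IsClockwiseOn.rotate (h : IsClockwiseOn F K) :
    IsClockwiseOn (rot90 ∘ F ∘ rot90.symm) (rot90.symm ⁻¹' K) := by
  intro p hp
  obtain ⟨h₁, h₂, h₃, h₄⟩ := h _ hp
  simp only [rot90_symm_apply, Function.comp_apply, rot90_apply] at h₁ h₂ h₃ h₄ ⊢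
  refine ⟨fun hp => neg_neg_of_pos (h₃ hp), fun hp => neg_pos_of_neg (h₄ hp),
    fun hp => h₂ (neg_pos_of_neg hp), fun hp => h₁ (neg_neg_of_pos hp)⟩

namespace IsClockwiseOrbit

variable {γ : ℝ → ℝ × ℝ}

theorem rotate (h : IsClockwiseOrbit γ F K) :
    IsClockwiseOrbit (rot90 ∘ γ) (rot90 ∘ F ∘ rot90.symm) (rot90.symm ⁻¹' K) where
  isCompact := rot90.symm.toHomeomorph.isCompact_preimage.2 h.isCompact
  continuousOn := rot90.continuous.comp_continuousOn
    (h.continuousOn.comp rot90.symm.continuous.continuousOn fun _ hp => hp)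
  isClockwiseOn := h.isClockwiseOn.rotate
  mem t := by simpa using h.mem t
  hasDerivAt t := by simpa using rot90.hasFDerivAt.comp_hasDerivAt t (h.hasDerivAt t)

theorem continuous (h : IsClockwiseOrbit γ F K) : Continuous γ :=
  continuous_iff_continuousAt.2 fun t => (h.hasDerivAt t).continuousAt

theorem hasDerivAt_fst (h : IsClockwiseOrbit γ F K) (t : ℝ) :
    HasDerivAt (fun t => (γ t).1) (F (γ t)).1 t :=
  (h.hasDerivAt t).fst

theorem hasDerivAt_snd (h : IsClockwiseOrbit γ F K) (t : ℝ) :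
    HasDerivAt (fun t => (γ t).2) (F (γ t)).2 t :=
  (h.hasDerivAt t).snd

theorem strictAntiOn_fst (h : IsClockwiseOrbit γ F K) {D : Set ℝ} (hD : Convex ℝ D)
    (hy : ∀ t ∈ interior D, (γ t).2 < 0) : StrictAntiOn (fun t => (γ t).1) D :=
  strictAntiOn_of_deriv_neg hD (continuous_fst.comp h.continuous).continuousOn fun t ht => by
    rw [(h.hasDerivAt_fst t).deriv]
    exact (h.isClockwiseOn _ (h.mem t)).1 (hy t ht)

theorem exists_quarter_turn (h : IsClockwiseOrbit γ F K) {s : ℝ} (hx : (γ s).1 ≤ 0)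
    (hy : (γ s).2 < 0) : ∃ t, s < t ∧ (γ t).2 = 0 ∧ (γ t).1 < 0 := by
  obtain ⟨t, hst, hyt⟩ : ∃ t, s ≤ t ∧ 0 ≤ (γ t).2 := by
    by_contra! hneg
    have hanti := h.strictAntiOn_fst (convex_Ici s) fun t ht => hneg t (interior_subset ht)
    set a := (γ (s + 1)).1
    have ha : a < 0 := (hanti self_mem_Ici (by simp) (by linarith)).trans_le hx
    -- Beyond `s + 1` the orbit stays in the compact part of `K` left of `x = a`,
    -- where `F` points upwards uniformly, so `y` would grow without bound.
    obtain ⟨δ, hδ, hFδ⟩ := (h.isCompact.inter_right (isClosed_le continuous_fst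
      continuous_const)).exists_forall_le'
      ((continuous_snd.comp_continuousOn h.continuousOn).mono inter_subset_left)
      fun p hp => (h.isClockwiseOn p hp.1).2.2.1 (lt_of_le_of_lt hp.2 ha)
    set t₀ := s + 1 - (γ (s + 1)).2 / δ
    have ht₀ : s + 1 ≤ t₀ := by
      have := div_nonpos_of_nonpos_of_nonneg (hneg (s + 1) (by linarith)).le hδ.le
      linarith
    have hgrowth : δ * (t₀ - (s + 1)) ≤ (γ t₀).2 - (γ (s + 1)).2 :=
      (convex_Ici (s + 1)).mul_sub_le_image_sub_of_le_deriv (f := fun t => (γ t).2)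
        (continuous_snd.comp h.continuous).continuousOn
        (fun t _ => (h.hasDerivAt_snd t).differentiableAt.differentiableWithinAt)
        (fun t ht => by
          rw [interior_Ici] at ht
          rw [(h.hasDerivAt_snd t).deriv]
          exact hFδ _ ⟨h.mem t, hanti.antitoneOn (mem_Ici.2 (by linarith))
            (mem_Ici.2 (by linarith [mem_Ioi.1 ht])) (le_of_lt ht)⟩)
        (s + 1) self_mem_Ici t₀ ht₀ ht₀
    have : δ * (t₀ - (s + 1)) = -(γ (s + 1)).2 := by
      simp only [t₀]; field_simp; ring
    linarith [hneg t₀ (by linarith)]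
  obtain ⟨u, hu, hyu, hneg⟩ :=
    exists_first_zero hst (continuous_snd.comp h.continuous).continuousOn hy hyt
  refine ⟨u, hu.1, hyu, ?_⟩
  have hanti := h.strictAntiOn_fst (convex_Icc s u) fun t ht => by
    rw [interior_Icc] at ht
    exact hneg t ⟨ht.1.le, ht.2⟩
  exact (hanti (left_mem_Icc.2 hu.1.le) (right_mem_Icc.2 hu.1.le) hu.1).trans_le hx

theorem exists_full_turn (h : IsClockwiseOrbit γ F K) {s : ℝ} (hx : (γ s).1 = 0)
    (hy : (γ s).2 < 0) : ∃ T, s < T ∧ (γ T).1 = 0 ∧ (γ T).2 < 0 := by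
  -- The `k`-th quarter turn of `γ` is the first quarter turn of its `k`-fold rotation.
  obtain ⟨t₁, h₀₁, hy₁, hx₁⟩ := h.exists_quarter_turn hx.le hy
  obtain ⟨t₂, h₁₂, hy₂, hx₂⟩ := h.rotate.exists_quarter_turn (s := t₁)
    (by simp [hy₁]) (by simpa using hx₁)
  obtain ⟨t₃, h₂₃, hy₃, hx₃⟩ := h.rotate.rotate.exists_quarter_turn (s := t₂)
    (by simpa using hy₂.ge) (by simpa using hx₂)
  obtain ⟨t₄, h₃₄, hy₄, hx₄⟩ := h.rotate.rotate.rotate.exists_quarter_turn (s := t₃)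
    (by simpa using hy₃.ge) (by simpa using hx₃)
  exact ⟨t₄, by linarith, by simpa using hy₄, by simpa using hx₄⟩

end IsClockwiseOrbit

end Planar

/-- The shape of `g` and `ψ` in Assumption 1, on `(a, b)` with peak at `m`. -/
structure IsSinglePeak (f : ℝ → ℝ) (a m b : ℝ) : Prop where
  differentiable : Differentiable ℝ f
  mem : m ∈ Ioo a b
  deriv_ne_zero : ∀ x ∈ Ioo a b, x ≠ m → deriv f x ≠ 0
  lt_apply : ∀ x ∈ Ioo a b, f a < f x
  apply_le : ∀ x ∈ Ioo a b, f x ≤ f m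

namespace IsSinglePeak

variable {f : ℝ → ℝ} {a m b : ℝ}

-- By Darboux `f'` has one sign on `(a, m)`; the mean value theorem on `[a, x]` tells which.
theorem deriv_pos (h : IsSinglePeak f a m b) : ∀ x ∈ Ioo a m, 0 < deriv f x := by
  have hne : ∀ x ∈ Ioo a m, deriv f x ≠ 0 := fun x hx =>
    h.deriv_ne_zero x ⟨hx.1, hx.2.trans h.mem.2⟩ hx.2.ne
  refine (hasDerivWithinAt_forall_lt_or_forall_gt_of_forall_ne (convex_Ioo a m)
    (fun x _ => (h.differentiable x).hasDerivAt.hasDerivWithinAt) hne).resolve_left ?_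
  intro hneg
  obtain ⟨x, hx⟩ := nonempty_Ioo.2 h.mem.1
  obtain ⟨ξ, hξ, hslope⟩ := exists_deriv_eq_slope f hx.1 h.differentiable.continuous.continuousOn
    h.differentiable.differentiableOn
  have : 0 < deriv f ξ := hslope ▸ div_pos (sub_pos.2 (h.lt_apply x ⟨hx.1, hx.2.trans h.mem.2⟩))
    (sub_pos.2 hx.1)
  exact (hneg ξ ⟨hξ.1, hξ.2.trans hx.2⟩).not_gt this

theorem deriv_neg (h : IsSinglePeak f a m b) : ∀ x ∈ Ioo m b, deriv f x < 0 := by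
  have hne : ∀ x ∈ Ioo m b, deriv f x ≠ 0 := fun x hx =>
    h.deriv_ne_zero x ⟨h.mem.1.trans hx.1, hx.2⟩ hx.1.ne'
  refine (hasDerivWithinAt_forall_lt_or_forall_gt_of_forall_ne (convex_Ioo m b)
    (fun x _ => (h.differentiable x).hasDerivAt.hasDerivWithinAt) hne).resolve_right ?_
  intro hpos
  obtain ⟨x, hx⟩ := nonempty_Ioo.2 h.mem.2
  obtain ⟨ξ, hξ, hslope⟩ := exists_deriv_eq_slope f hx.1 h.differentiable.continuous.continuousOn
    h.differentiable.differentiableOn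
  have : deriv f ξ ≤ 0 := hslope ▸ div_nonpos_of_nonpos_of_nonneg
    (sub_nonpos.2 (h.apply_le x ⟨h.mem.1.trans hx.1, hx.2⟩)) (sub_pos.2 hx.1).le
  exact (hpos ξ ⟨hξ.1, hξ.2.trans hx.2⟩).not_ge this

theorem strictMonoOn (h : IsSinglePeak f a m b) : StrictMonoOn f (Icc a m) :=
  strictMonoOn_of_deriv_pos (convex_Icc a m) h.differentiable.continuous.continuousOn
    fun x hx => h.deriv_pos x (by rwa [interior_Icc] at hx)

theorem strictAntiOn (h : IsSinglePeak f a m b) : StrictAntiOn f (Icc m b) :=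
  strictAntiOn_of_deriv_neg (convex_Icc m b) h.differentiable.continuous.continuousOn
    fun x hx => h.deriv_neg x (by rwa [interior_Icc] at hx)

theorem apply_lt (h : IsSinglePeak f a m b) {x : ℝ} (hx : x ∈ Ioo a b) (hxm : x ≠ m) :
    f x < f m := by
  rcases hxm.lt_or_gt with hlt | hgt
  · exact h.strictMonoOn ⟨hx.1.le, hlt.le⟩ ⟨h.mem.1.le, le_rfl⟩ hlt
  · exact h.strictAntiOn ⟨le_rfl, h.mem.2.le⟩ ⟨hgt.le, hx.2.le⟩ hgt

end IsSinglePeak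

noncomputable def charField (φ ψ : ℝ → ℝ) (p : ℝ × ℝ) : ℝ × ℝ :=
  (eta φ ψ p.1 p.2, zeta φ ψ p.1 p.2)

section CharacteristicCurves

variable {φ ψ : ℝ → ℝ} {R H r_o z_o : ℝ}

theorem continuousOn_charField (hφ : ContDiff ℝ 1 φ) (hψ : ContDiff ℝ 1 ψ) :
    ContinuousOn (charField φ ψ) {p | p.1 ≠ 0} := by
  have hg : Continuous (deriv fun s => s * φ s) := (contDiff_id.mul hφ).continuous_deriv le_rfl
  refine ContinuousOn.prodMk (Continuous.continuousOn ?_)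
    (ContinuousOn.div (Continuous.continuousOn ?_) continuousOn_fst fun p hp => hp)
  · exact ((hφ.continuous.comp continuous_fst).mul
      ((hψ.continuous_deriv le_rfl).comp continuous_snd)).neg
  · exact (hg.comp continuous_fst).mul (hψ.continuous.comp continuous_snd)

theorem isClockwiseOn_charField (hφpos : ∀ r ∈ Ioo (0:ℝ) R, 0 < φ r)
    (hψpos : ∀ z ∈ Ioo (0:ℝ) H, 0 < ψ z) (hg : IsSinglePeak (fun r => r * φ r) 0 r_o R)
    (hψ : IsSinglePeak ψ 0 z_o H) :
    IsClockwiseOn (fun p => charField φ ψ (p + (r_o, z_o)))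
      ((· + (r_o, z_o)) ⁻¹' Ioo 0 R ×ˢ Ioo 0 H) := by
  rintro ⟨x, y⟩ ⟨hr, hz⟩
  simp only [Prod.mk_add_mk, mem_Ioo] at hr hz
  have hφr := hφpos _ hr
  have hψz := hψpos _ hz
  simp only [charField, eta, zeta, Prod.mk_add_mk]
  refine ⟨fun hy => ?_, fun hy => ?_, fun hx => ?_, fun hx => ?_⟩
  · exact neg_neg_of_pos (mul_pos hφr (hψ.deriv_pos _ ⟨hz.1, by linarith⟩))
  · exact neg_pos_of_neg (mul_neg_of_pos_of_neg hφr (hψ.deriv_neg _ ⟨by linarith, hz.2⟩))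
  · exact div_pos (mul_pos (hg.deriv_pos _ ⟨hr.1, by linarith⟩) hψz) hr.1
  · exact div_neg_of_neg_of_pos (mul_neg_of_neg_of_pos (hg.deriv_neg _ ⟨by linarith, hr.2⟩) hψz)
      hr.1

theorem circ_lt_of_ne (hψpos : ∀ z ∈ Ioo (0:ℝ) H, 0 < ψ z)
    (hg : IsSinglePeak (fun r => r * φ r) 0 r_o R) (hψ : IsSinglePeak ψ 0 z_o H)
    {p : ℝ × ℝ} (hp : p ∈ Ioo 0 R ×ˢ Ioo 0 H) (hne : p ≠ (r_o, z_o)) :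
    circ φ ψ p < circ φ ψ (r_o, z_o) := by
  have hgo : 0 < r_o * φ r_o := by simpa using hg.lt_apply r_o hg.mem
  have hψp := hψpos p.2 hp.2
  simp only [circ]
  by_cases hr : p.1 = r_o
  · have hz : p.2 ≠ z_o := fun hz => hne (Prod.ext hr hz)
    rw [hr]
    exact mul_lt_mul_of_pos_left (hψ.apply_lt hp.2 hz) hgo
  · calc p.1 * φ p.1 * ψ p.2 < r_o * φ r_o * ψ p.2 :=
          mul_lt_mul_of_pos_right (hg.apply_lt hp.1 hr) hψp
      _ ≤ r_o * φ r_o * ψ z_o := mul_le_mul_of_nonneg_left (hψ.apply_le p.2 hp.2) hgo.le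

theorem eq_of_circ_eq_of_fst_eq {p q : ℝ × ℝ} (h : circ φ ψ p = circ φ ψ q)
    (h₁ : p.1 = q.1) (hq : q.1 * φ q.1 ≠ 0) {s : Set ℝ} (hψ : InjOn ψ s) (hp₂ : p.2 ∈ s)
    (hq₂ : q.2 ∈ s) : p = q := by
  simp only [circ, h₁] at h
  exact Prod.ext h₁ (hψ hp₂ hq₂ (mul_left_cancel₀ hq h))

variable {c : ℝ → ℝ × ℝ}

theorem IsCharCurve.hasDerivAt (hc : IsCharCurve φ ψ univ c) (t : ℝ) :
    HasDerivAt c (charField φ ψ (c t)) t :=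
  hasDerivWithinAt_univ.1 (hc.2 t (mem_univ t))

theorem IsCharCurve.circ_eq_s3 (hφ : Differentiable ℝ φ) (hψ : Differentiable ℝ ψ)
    (hc : IsCharCurve φ ψ univ c) (t s : ℝ) : circ φ ψ (c t) = circ φ ψ (c s) := by
  have hg : Differentiable ℝ fun r => r * φ r := differentiable_id.mul hφ
  have hderiv : ∀ t, HasDerivAt (fun t => circ φ ψ (c t)) 0 t := by
    intro t
    have hr : (c t).1 ≠ 0 := (hc.1 t (mem_univ t)).ne'
    refine (((hg _).hasDerivAt.comp t (hc.hasDerivAt t).fst).mul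
      ((hψ _).hasDerivAt.comp t (hc.hasDerivAt t).snd)).congr_deriv ?_
    simp only [charField, eta, zeta, Function.comp_apply]
    field_simp
    ring
  exact is_const_of_deriv_eq_zero (fun t => (hderiv t).differentiableAt)
    (fun t => (hderiv t).deriv) t s

theorem IsCharCurve.isClockwiseOrbit {K : Set (ℝ × ℝ)}
    (hc : IsCharCurve φ ψ univ c) (hφ : ContDiff ℝ 1 φ) (hψ : ContDiff ℝ 1 ψ)
    (hφpos : ∀ r ∈ Ioo (0:ℝ) R, 0 < φ r) (hψpos : ∀ z ∈ Ioo (0:ℝ) H, 0 < ψ z)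
    (hgpeak : IsSinglePeak (fun r => r * φ r) 0 r_o R) (hψpeak : IsSinglePeak ψ 0 z_o H)
    (hK : IsCompact K) (hKsub : K ⊆ Ioo 0 R ×ˢ Ioo 0 H) (hcK : ∀ t, c t ∈ K) :
    IsClockwiseOrbit (fun t => c t - (r_o, z_o)) (fun p => charField φ ψ (p + (r_o, z_o)))
      ((· + (r_o, z_o)) ⁻¹' K) where
  isCompact := (Homeomorph.addRight (r_o, z_o)).isCompact_preimage.2 hK
  continuousOn := (continuousOn_charField hφ hψ).comp (continuous_add_const _).continuousOn
    fun _ hp => (hKsub hp).1.1.ne'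
  isClockwiseOn := (isClockwiseOn_charField hφpos hψpos hgpeak hψpeak).mono
    (preimage_mono hKsub)
  mem t := by simpa using hcK t
  hasDerivAt t := by simpa using (hc.hasDerivAt t).sub_const (r_o, z_o)

end CharacteristicCurves

theorem characteristic_through_ro_is_closed_general
    (R H : ℝ)
    (φ ψ : ℝ → ℝ)
    (hφC2 : ContDiff ℝ 2 φ) (hψC2 : ContDiff ℝ 2 ψ)
    (hψ0 : ψ 0 = 0)
    (hφpos : ∀ r ∈ Ioo (0:ℝ) R, 0 < φ r)
    (hψpos : ∀ z ∈ Ioo (0:ℝ) H, 0 < ψ z)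
    (r_o : ℝ) (hro : r_o ∈ Ioo (0:ℝ) R)
    (z_o : ℝ) (hzo : z_o ∈ Ioo (0:ℝ) H)
    (hg'ne : ∀ r ∈ Ioo (0:ℝ) R, r ≠ r_o → deriv (fun s => s * φ s) r ≠ 0)
    (hψ'ne : ∀ z ∈ Ioo (0:ℝ) H, z ≠ z_o → deriv ψ z ≠ 0)
    (hgmax : ∀ r ∈ Ioo (0:ℝ) R, r * φ r ≤ r_o * φ r_o)
    (hψmax : ∀ z ∈ Ioo (0:ℝ) H, ψ z ≤ ψ z_o)
    (z₁ : ℝ) (hz₁ : z₁ ∈ Ioo (0:ℝ) H)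
    (c : ℝ → ℝ × ℝ) (hc : IsCharCurve φ ψ univ c)
    (hc0 : c 0 = (r_o, z₁))
    (K : Set (ℝ × ℝ)) (hK : IsCompact K)
    (hKsub : K ⊆ Ioo (0:ℝ) R ×ˢ Ioo (0:ℝ) H)
    (hcK : ∀ t : ℝ, c t ∈ K) :
    ∃ T : ℝ, 0 < T ∧ c T = c 0 := by
  have hφ : ContDiff ℝ 1 φ := hφC2.of_le (by norm_num)
  have hψ : ContDiff ℝ 1 ψ := hψC2.of_le (by norm_num)
  have hgpeak : IsSinglePeak (fun r => r * φ r) 0 r_o R :=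
    ⟨(contDiff_id.mul hφ).differentiable one_ne_zero, hro, hg'ne,
      fun r hr => by simpa using mul_pos hr.1 (hφpos r hr), hgmax⟩
  have hψpeak : IsSinglePeak ψ 0 z_o H :=
    ⟨hψ.differentiable one_ne_zero, hzo, hψ'ne, fun z hz => by simpa [hψ0] using hψpos z hz, hψmax⟩
  have horbit := hc.isClockwiseOrbit hφ hψ hφpos hψpos hgpeak hψpeak hK hKsub hcK
  have hcirc t := hc.circ_eq_s3 (hφ.differentiable one_ne_zero) (hψ.differentiable one_ne_zero) t 0
  have hgo : (c 0).1 * φ (c 0).1 ≠ 0 := by simpa [hc0] using (mul_pos hro.1 (hφpos r_o hro)).ne'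
  have hz t : (c t).2 ∈ Ioo 0 H := (hKsub (hcK t)).2
  rcases lt_trichotomy z₁ z_o with hlt | rfl | hgt
  · obtain ⟨T, hT, hrT, hzT⟩ := horbit.exists_full_turn (s := 0) (by simp [hc0])
      (by simpa [hc0] using hlt)
    simp only [sub_eq_zero, Prod.fst_sub, Prod.snd_sub, sub_neg] at hrT hzT
    exact ⟨T, hT, eq_of_circ_eq_of_fst_eq (hcirc T) (by simp [hc0, hrT]) hgo
      hψpeak.strictMonoOn.injOn ⟨(hz T).1.le, hzT.le⟩ (by simp [hc0, hz₁.1.le, hlt.le])⟩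
  · have hconst t : c t = (r_o, z₁) := by
      by_contra hne
      exact (circ_lt_of_ne hψpos hgpeak hψpeak (hKsub (hcK t)) hne).ne (hc0 ▸ hcirc t)
    exact ⟨1, one_pos, by rw [hconst, hconst]⟩
  · obtain ⟨T, hT, hrT, hzT⟩ := horbit.rotate.rotate.exists_full_turn (s := 0) (by simp [hc0])
      (by simpa [hc0] using hgt)
    simp only [rot90_apply, Function.comp_apply, Prod.fst_sub, Prod.snd_sub,
      neg_sub, sub_eq_zero, sub_neg] at hrT hzT
    exact ⟨T, hT, eq_of_circ_eq_of_fst_eq (hcirc T) (by simp [hc0, hrT]) hgo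
      hψpeak.strictAntiOn.injOn ⟨hzT.le, (hz T).2.le⟩ (by simp [hc0, hz₁.2.le, hgt.le])⟩

/-- Characteristic curves through the line `r = r_o` that remain in a compact subset of
the open interior of the domain are closed curves. -/
theorem characteristic_through_ro_is_closed
    (R H : ℝ) (hR : 0 < R) (hH : 0 < H)
    (φ ψ : ℝ → ℝ)
    (hφC2 : ContDiff ℝ 2 φ) (hψC2 : ContDiff ℝ 2 ψ)
    (hφ0 : φ 0 = 0) (hψ0 : ψ 0 = 0)
    (hφpos : ∀ r ∈ Ioo (0:ℝ) R, 0 < φ r)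
    (hψpos : ∀ z ∈ Ioo (0:ℝ) H, 0 < ψ z)
    (r_o : ℝ) (hro : r_o ∈ Ioo (0:ℝ) R)
    (z_o : ℝ) (hzo : z_o ∈ Ioo (0:ℝ) H)
    (hg'ro : deriv (fun s => s * φ s) r_o = 0)
    (hg'ne : ∀ r ∈ Ioo (0:ℝ) R, r ≠ r_o → deriv (fun s => s * φ s) r ≠ 0)
    (hψ'zo : deriv ψ z_o = 0)
    (hψ'ne : ∀ z ∈ Ioo (0:ℝ) H, z ≠ z_o → deriv ψ z ≠ 0)
    (hgmax : ∀ r ∈ Ioo (0:ℝ) R, r * φ r ≤ r_o * φ r_o)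
    (hψmax : ∀ z ∈ Ioo (0:ℝ) H, ψ z ≤ ψ z_o)
    (z₁ : ℝ) (hz₁ : z₁ ∈ Ioo (0:ℝ) H)
    (c : ℝ → ℝ × ℝ) (hc : IsCharCurve φ ψ univ c)
    (hc0 : c 0 = (r_o, z₁))
    (K : Set (ℝ × ℝ)) (hK : IsCompact K)
    (hKsub : K ⊆ Ioo (0:ℝ) R ×ˢ Ioo (0:ℝ) H)
    (hcK : ∀ t : ℝ, c t ∈ K) :
    ∃ T : ℝ, 0 < T ∧ c T = c 0 :=
  characteristic_through_ro_is_closed_general R H φ ψ hφC2 hψC2 hψ0 hφpos hψpos r_o hro z_o hzo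
    hg'ne hψ'ne hgmax hψmax z₁ hz₁ c hc hc0 K hK hKsub hcK
end

section
/- Under Assumption 1, suppose c : [0,T] → ℝ² is continuous with T > 0, c(t) ∈ (0,R)×(0,H) for all t ∈ [0,T), c restricted to [0,T) is a characteristic curve, and c(T) ∈ [0,R]×[0,H]. Then both coordinates of c(T) are strictly positive: c(T).1 > 0 and c(T).2 > 0. (This is the paper's Proposition that no characteristic curve starting in the open domain may intersect the axes r = 0 or z = 0, since the circulation Γ is positive on the interior, vanishes on the axes, and is conserved along characteristic curves.) -/
open Set

/-! The circulation `Γ = g(r)·ψ(z)` is a first integral of the characteristic system: along a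
characteristic curve its derivative is `g'·η·ψ + g·ψ'·ζ = -g'φψ'ψ + rφψ'·g'ψ/r = 0`. So `Γ` keeps
along the curve, and by continuity at the endpoint as well, its positive initial value. Since `Γ`
vanishes on both axes, the endpoint cannot lie on them. -/

section Circulation

variable {φ ψ : ℝ → ℝ}

theorem circ_pos {R H : ℝ} (hφpos : ∀ r ∈ Ioo (0:ℝ) R, 0 < φ r)
    (hψpos : ∀ z ∈ Ioo (0:ℝ) H, 0 < ψ z) {p : ℝ × ℝ} (hp : p ∈ Ioo (0:ℝ) R ×ˢ Ioo (0:ℝ) H) :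
    0 < circ φ ψ p :=
  mul_pos (mul_pos hp.1.1 (hφpos _ hp.1)) (hψpos _ hp.2)

theorem pos_of_circ_pos (hψ0 : ψ 0 = 0) {p : ℝ × ℝ} (h1 : 0 ≤ p.1) (h2 : 0 ≤ p.2)
    (hp : 0 < circ φ ψ p) : 0 < p.1 ∧ 0 < p.2 := by
  refine ⟨h1.lt_of_ne ?_, h2.lt_of_ne ?_⟩ <;> rintro hzero <;> simp [circ, ← hzero, hψ0] at hp

theorem continuous_circ (hφ : Continuous φ) (hψ : Continuous ψ) : Continuous (circ φ ψ) :=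
  (continuous_fst.mul (hφ.comp continuous_fst)).mul (hψ.comp continuous_snd)

theorem IsCharCurve.hasDerivWithinAt_circ_s6 (hφ : Differentiable ℝ φ) (hψ : Differentiable ℝ ψ)
    {I : Set ℝ} {c : ℝ → ℝ × ℝ} (hc : IsCharCurve φ ψ I c) {t : ℝ} (ht : t ∈ I) :
    HasDerivWithinAt (fun t => circ φ ψ (c t)) 0 I t := by
  have hr : (c t).1 ≠ 0 := (hc.1 t ht).ne'
  have hg : HasDerivAt (fun s => s * φ s) (deriv (fun s => s * φ s) (c t).1) (c t).1 :=
    (differentiable_id.mul hφ _).hasDerivAt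
  have hΓ := (hg.comp_hasDerivWithinAt t (hc.2 t ht).fst).mul
    ((hψ _).hasDerivAt.comp_hasDerivWithinAt t (hc.2 t ht).snd)
  refine hΓ.congr_deriv ?_
  simp only [eta, zeta, Function.comp_apply]
  field_simp
  ring

theorem IsCharCurve.circ_eq_of_continuousOn (hφ : ContDiff ℝ 1 φ) (hψ : ContDiff ℝ 1 ψ)
    {a b : ℝ} {c : ℝ → ℝ × ℝ} (hc : IsCharCurve φ ψ (Ico a b) c)
    (hcont : ContinuousOn c (Icc a b)) {t : ℝ} (ht : t ∈ Icc a b) :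
    circ φ ψ (c t) = circ φ ψ (c a) := by
  refine constant_of_has_deriv_right_zero
    ((continuous_circ hφ.continuous hψ.continuous).comp_continuousOn hcont) (fun x hx => ?_) t ht
  exact (hc.hasDerivWithinAt_circ_s6 (hφ.differentiable one_ne_zero) (hψ.differentiable one_ne_zero)
    hx).mono_of_mem_nhdsWithin
    (Filter.mem_of_superset (Ico_mem_nhdsGE hx.2) (Ico_subset_Ico_left hx.1))

end Circulation

theorem characteristic_cannot_reach_axes_general
    (R H : ℝ)
    (φ ψ : ℝ → ℝ)
    (hφC2 : ContDiff ℝ 2 φ) (hψC2 : ContDiff ℝ 2 ψ)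
    (hψ0 : ψ 0 = 0)
    (hφpos : ∀ r ∈ Ioo (0:ℝ) R, 0 < φ r)
    (hψpos : ∀ z ∈ Ioo (0:ℝ) H, 0 < ψ z)
    (T : ℝ) (hT : 0 < T)
    (c : ℝ → ℝ × ℝ) (hcont : ContinuousOn c (Icc 0 T))
    (hcin : ∀ t ∈ Ico (0:ℝ) T, c t ∈ Ioo (0:ℝ) R ×ˢ Ioo (0:ℝ) H)
    (hc : IsCharCurve φ ψ (Ico 0 T) c)
    (hcT : c T ∈ Icc (0:ℝ) R ×ˢ Icc (0:ℝ) H) :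
    0 < (c T).1 ∧ 0 < (c T).2 := by
  have hΓ0 : 0 < circ φ ψ (c 0) := circ_pos hφpos hψpos (hcin 0 ⟨le_rfl, hT⟩)
  have hΓT : circ φ ψ (c T) = circ φ ψ (c 0) :=
    hc.circ_eq_of_continuousOn (hφC2.of_le (by norm_num)) (hψC2.of_le (by norm_num)) hcont
      ⟨hT.le, le_rfl⟩
  exact pos_of_circ_pos hψ0 hcT.1.1 hcT.2.1 (hΓT ▸ hΓ0)

/-- No characteristic curve that stays in the open domain may intersect the axes
`r = 0` or `z = 0`: if the curve has a continuous extension to the closed domain at a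
final time `T`, then both coordinates at time `T` are still strictly positive. -/
theorem characteristic_cannot_reach_axes
    (R H : ℝ) (hR : 0 < R) (hH : 0 < H)
    (φ ψ : ℝ → ℝ)
    (hφC2 : ContDiff ℝ 2 φ) (hψC2 : ContDiff ℝ 2 ψ)
    (hφ0 : φ 0 = 0) (hψ0 : ψ 0 = 0)
    (hφpos : ∀ r ∈ Ioo (0:ℝ) R, 0 < φ r)
    (hψpos : ∀ z ∈ Ioo (0:ℝ) H, 0 < ψ z)
    (r_o : ℝ) (hro : r_o ∈ Ioo (0:ℝ) R)
    (z_o : ℝ) (hzo : z_o ∈ Ioo (0:ℝ) H)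
    (hg'ro : deriv (fun s => s * φ s) r_o = 0)
    (hg'ne : ∀ r ∈ Ioo (0:ℝ) R, r ≠ r_o → deriv (fun s => s * φ s) r ≠ 0)
    (hψ'zo : deriv ψ z_o = 0)
    (hψ'ne : ∀ z ∈ Ioo (0:ℝ) H, z ≠ z_o → deriv ψ z ≠ 0)
    (hgmax : ∀ r ∈ Ioo (0:ℝ) R, r * φ r ≤ r_o * φ r_o)
    (hψmax : ∀ z ∈ Ioo (0:ℝ) H, ψ z ≤ ψ z_o)
    (T : ℝ) (hT : 0 < T)
    (c : ℝ → ℝ × ℝ) (hcont : ContinuousOn c (Icc 0 T))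
    (hcin : ∀ t ∈ Ico (0:ℝ) T, c t ∈ Ioo (0:ℝ) R ×ˢ Ioo (0:ℝ) H)
    (hc : IsCharCurve φ ψ (Ico 0 T) c)
    (hcT : c T ∈ Icc (0:ℝ) R ×ˢ Icc (0:ℝ) H) :
    0 < (c T).1 ∧ 0 < (c T).2 :=
  characteristic_cannot_reach_axes_general R H φ ψ hφC2 hψC2 hψ0 hφpos hψpos T hT c hcont hcin hc
    hcT
end

section
/- Under Assumption 1, let h ∈ (z_o, H) and let h_o ∈ (0, z_o) satisfy ψ(h_o) = ψ(h). Then for every point (r,z) of the surface layer below h_o, i.e., every (r,z) ∈ (0,R)×(0,h_o), one has the strict circulation bound Γ(r,z) < g(r_o)·ψ(h). (Every point strictly below the minimum unreachable height has circulation strictly smaller than the circulation at the point (r_o, h) on the minimum observable height line; this is the quantitative heart of the paper's Theorem 1.) -/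
open Set

/-- Every point strictly below the minimum unreachable height `h_o` has circulation
strictly smaller than the circulation `g(r_o)·ψ(h)` at the point `(r_o, h)` on the
minimum observable height line. -/
theorem circulation_bound_below_minimum_unreachable_height
    (R H : ℝ) (hR : 0 < R) (hH : 0 < H)
    (φ ψ : ℝ → ℝ)
    (hφC2 : ContDiff ℝ 2 φ) (hψC2 : ContDiff ℝ 2 ψ)
    (hφ0 : φ 0 = 0) (hψ0 : ψ 0 = 0)
    (hφpos : ∀ r ∈ Ioo (0:ℝ) R, 0 < φ r)
    (hψpos : ∀ z ∈ Ioo (0:ℝ) H, 0 < ψ z)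
    (r_o : ℝ) (hro : r_o ∈ Ioo (0:ℝ) R)
    (z_o : ℝ) (hzo : z_o ∈ Ioo (0:ℝ) H)
    (hg'ro : deriv (fun s => s * φ s) r_o = 0)
    (hg'ne : ∀ r ∈ Ioo (0:ℝ) R, r ≠ r_o → deriv (fun s => s * φ s) r ≠ 0)
    (hψ'zo : deriv ψ z_o = 0)
    (hψ'ne : ∀ z ∈ Ioo (0:ℝ) H, z ≠ z_o → deriv ψ z ≠ 0)
    (hgmax : ∀ r ∈ Ioo (0:ℝ) R, r * φ r ≤ r_o * φ r_o)
    (hψmax : ∀ z ∈ Ioo (0:ℝ) H, ψ z ≤ ψ z_o)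
    (h : ℝ) (hh : h ∈ Ioo z_o H)
    (h_o : ℝ) (hho : h_o ∈ Ioo (0:ℝ) z_o) (hψho : ψ h_o = ψ h) :
    ∀ r ∈ Ioo (0:ℝ) R, ∀ z ∈ Ioo (0:ℝ) h_o,
      circ φ ψ (r, z) < r_o * φ r_o * ψ h := by
  intro r hr z hz
  have hψdiff : Differentiable ℝ ψ := hψC2.differentiable (by norm_num)
  have hψ'cont : Continuous (deriv ψ) := hψC2.continuous_deriv (by norm_num)
  -- deriv ψ is positive on (0, z_o)
  have hpos : ∀ x ∈ Ioo (0:ℝ) z_o, 0 < deriv ψ x := by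
    intro x hx
    have hxH : x ∈ Ioo (0:ℝ) H := ⟨hx.1, hx.2.trans hzo.2⟩
    have hne := hψ'ne x hxH (ne_of_lt hx.2)
    by_contra hle
    have hxneg : deriv ψ x < 0 := lt_of_le_of_ne (not_lt.mp hle) hne
    have hallneg : ∀ y ∈ Ioo (0:ℝ) z_o, deriv ψ y < 0 := by
      intro y hy
      have hyH : y ∈ Ioo (0:ℝ) H := ⟨hy.1, hy.2.trans hzo.2⟩
      have hyne := hψ'ne y hyH (ne_of_lt hy.2)
      by_contra hyle
      have hypos : 0 < deriv ψ y := lt_of_le_of_ne (not_lt.mp hyle) (Ne.symm hyne)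
      have hxy : x ≠ y := by
        intro hxy; rw [hxy] at hxneg; linarith
      rcases lt_or_gt_of_ne hxy with hlt | hgt
      · obtain ⟨c, hc, hc0⟩ :=
          intermediate_value_Ioo hlt.le hψ'cont.continuousOn
            (show (0:ℝ) ∈ Ioo (deriv ψ x) (deriv ψ y) from ⟨hxneg, hypos⟩)
        have hcIoo : c ∈ Ioo (0:ℝ) H :=
          ⟨hx.1.trans hc.1, (hc.2.trans hy.2).trans hzo.2⟩
        exact hψ'ne c hcIoo (ne_of_lt ((hc.2.trans hy.2))) hc0
      · obtain ⟨c, hc, hc0⟩ :=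
          intermediate_value_Ioo' hgt.le hψ'cont.continuousOn
            (show (0:ℝ) ∈ Ioo (deriv ψ x) (deriv ψ y) from ⟨hxneg, hypos⟩)
        have hcIoo : c ∈ Ioo (0:ℝ) H :=
          ⟨hy.1.trans hc.1, (hc.2.trans hx.2).trans hzo.2⟩
        exact hψ'ne c hcIoo (ne_of_lt ((hc.2.trans hx.2))) hc0
    have hanti : StrictAntiOn ψ (Icc (0:ℝ) z_o) :=
      strictAntiOn_of_deriv_neg (convex_Icc 0 z_o) hψdiff.continuous.continuousOn
        (fun y hy => by rw [interior_Icc] at hy; exact hallneg y hy)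
    have : ψ x < ψ 0 :=
      hanti (left_mem_Icc.mpr hzo.1.le) ⟨hx.1.le, hx.2.le⟩ hx.1
    rw [hψ0] at this
    exact absurd (hψpos x hxH) (not_lt.mpr this.le)
  have hmono : StrictMonoOn ψ (Icc (0:ℝ) z_o) :=
    strictMonoOn_of_deriv_pos (convex_Icc 0 z_o) hψdiff.continuous.continuousOn
      (fun y hy => by rw [interior_Icc] at hy; exact hpos y hy)
  have hzho : ψ z < ψ h_o :=
    hmono ⟨hz.1.le, (hz.2.trans hho.2).le⟩ ⟨hho.1.le, hho.2.le⟩ hz.2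
  have hψh : ψ z < ψ h := hψho ▸ hzho
  have hzH : z ∈ Ioo (0:ℝ) H := ⟨hz.1, (hz.2.trans hho.2).trans hzo.2⟩
  have hψzpos : 0 < ψ z := hψpos z hzH
  have hgro : 0 < r_o * φ r_o := mul_pos hro.1 (hφpos r_o hro)
  have h1 : r * φ r * ψ z ≤ r_o * φ r_o * ψ z :=
    mul_le_mul_of_nonneg_right (hgmax r hr) hψzpos.le
  have h2 : r_o * φ r_o * ψ z < r_o * φ r_o * ψ h :=
    mul_lt_mul_of_pos_left hψh hgro
  simpa [circ] using h1.trans_lt h2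
end
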